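/- arXiv:2211.01410 — 2 statements merged into one kernel-verified Lean document; each statement's English description precedes it below -/
import Mathlib

section
/- Let c(r) denote the r-th smallest positive integer whose Tribonacci representation set contains 3. Then for every r ≥ 1, the difference c(r+1) − c(r) equals either 2 or 3. -/
/-!
Tribonacci representations are unique, since the greedy bound `∑ i ∈ S, trib i < trib m` for a
representation below `m` forces the largest indices to agree, and they exist by greedy choice.
As `trib 3 = 1`, removing `3` from a representation of `n + 1` would give a second representation
of `n`, so no two consecutive integers lie in the first column. If `n` does, let `R₁, R₂` represent
`n + 1, n + 2`: adding `3` to either one puts `n + 2` or `n + 3` in the column unless both contain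
`4` and `5`; but then `R₁ \ {4, 5}` and `R₂ \ {4, 5}` represent consecutive integers, and adding `3`
to the first gives a representation of the second containing `3`, contradicting uniqueness.
-/

/-- The Tribonacci sequence: T(0)=0, T(1)=0, T(2)=1,
    T(n+3) = T(n+2) + T(n+1) + T(n). -/
def trib : ℕ → ℕ
  | 0 => 0
  | 1 => 0
  | 2 => 1
  | n + 3 => trib (n + 2) + trib (n + 1) + trib n

/-- A Tribonacci representation set: a finite set of naturals, all at least 3,
    containing no three consecutive integers. -/
def IsTribRep (S : Finset ℕ) : Prop :=
  (∀ i ∈ S, 3 ≤ i) ∧ ∀ i : ℕ, ¬(i ∈ S ∧ i + 1 ∈ S ∧ i + 2 ∈ S)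

open Finset

theorem trib_add_three (n : ℕ) : trib (n + 3) = trib (n + 2) + trib (n + 1) + trib n := rfl

theorem trib_mono : Monotone trib := by
  refine monotone_nat_of_le_succ fun n => ?_
  match n with
  | 0 | 1 => decide
  | n + 2 => rw [trib_add_three]; omega

theorem trib_pos {n : ℕ} (hn : 2 ≤ n) : 0 < trib n :=
  Nat.lt_of_lt_of_le Nat.one_pos (trib_mono hn)

theorem lt_trib_add_four (n : ℕ) : n < trib (n + 4) := by
  induction n with
  | zero => decide
  | succ n ih =>
    show n + 1 < trib (n + 5)
    have : trib (n + 5) = trib (n + 4) + trib (n + 3) + trib (n + 2) := rfl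
    have := trib_pos (show 2 ≤ n + 3 by omega)
    omega

namespace IsTribRep

variable {S T : Finset ℕ}

theorem subset (hT : IsTribRep T) (h : S ⊆ T) : IsTribRep S :=
  ⟨fun i hi => hT.1 i (h hi), fun i hi => hT.2 i ⟨h hi.1, h hi.2.1, h hi.2.2⟩⟩

theorem insert (hS : IsTribRep S) {a : ℕ} (ha : 3 ≤ a)
    (h₁ : ¬(a - 2 ∈ S ∧ a - 1 ∈ S)) (h₂ : ¬(a - 1 ∈ S ∧ a + 1 ∈ S))
    (h₃ : ¬(a + 1 ∈ S ∧ a + 2 ∈ S)) : IsTribRep (Insert.insert a S) := by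
  refine ⟨fun i hi => ?_, fun i hi => ?_⟩
  · rcases mem_insert.1 hi with rfl | hi
    exacts [ha, hS.1 i hi]
  · simp only [mem_insert] at hi
    grind [hS.2 i]

theorem insert_of_lt (hS : IsTribRep S) {a : ℕ} (ha : 3 ≤ a) (hlt : ∀ i ∈ S, i < a)
    (hgap : a - 1 ∉ S ∨ a - 2 ∉ S) : IsTribRep (Insert.insert a S) := by
  refine hS.insert ha (by tauto) (fun h => ?_) (fun h => ?_)
  · exact absurd (hlt _ h.2) (by omega)
  · exact absurd (hlt _ h.1) (by omega)

theorem sum_range_ite_lt (hS : IsTribRep S) {m : ℕ} (hm : 2 ≤ m) :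
    ∑ i ∈ range m, (if i ∈ S then trib i else 0) < trib m := by
  induction m using Nat.strong_induction_on with
  | _ m ih =>
  have hlow : ∀ i < 3, i ∉ S := fun i hi h => by have := hS.1 i h; omega
  match m, hm with
  | 2, _ | 3, _ =>
    rw [sum_eq_zero fun i hi => if_neg (hlow i (by have := mem_range.1 hi; omega))]
    decide
  | k + 4, _ =>
    have hrec : trib (k + 4) = trib (k + 3) + trib (k + 2) + trib (k + 1) := rfl
    by_cases h3 : k + 3 ∈ S
    · by_cases h2 : k + 2 ∈ S
      · have h1 : k + 1 ∉ S := fun h1 => hS.2 (k + 1) ⟨h1, h2, h3⟩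
        have := ih (k + 1) (by omega) (by have := hS.1 _ h2; omega)
        rw [sum_range_succ, sum_range_succ, sum_range_succ, if_neg h1, if_pos h2, if_pos h3]
        omega
      · have := ih (k + 2) (by omega) (by omega)
        rw [sum_range_succ, sum_range_succ, if_neg h2, if_pos h3]
        omega
    · have := ih (k + 3) (by omega) (by omega)
      have := trib_mono (show k + 3 ≤ k + 4 by omega)
      rw [sum_range_succ, if_neg h3]
      omega

theorem sum_lt_trib (hS : IsTribRep S) {m : ℕ} (hm : 2 ≤ m) (hlt : ∀ i ∈ S, i < m) :
    ∑ i ∈ S, trib i < trib m := by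
  have hsub : S ⊆ range m := fun i hi => mem_range.2 (hlt i hi)
  simpa [sum_ite_mem, inter_eq_right.2 hsub] using hS.sum_range_ite_lt hm

theorem sum_lt_sum_of_forall_lt (hS : IsTribRep S) (hT : IsTribRep T) {b : ℕ} (hb : b ∈ T)
    (hlt : ∀ i ∈ S, i < b) : ∑ i ∈ S, trib i < ∑ i ∈ T, trib i :=
  calc ∑ i ∈ S, trib i < trib b := hS.sum_lt_trib (by have := hT.1 b hb; omega) hlt
    _ ≤ ∑ i ∈ T, trib i := single_le_sum (fun _ _ => Nat.zero_le _) hb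

theorem eq_of_sum_eq (hS : IsTribRep S) (hT : IsTribRep T)
    (h : ∑ i ∈ S, trib i = ∑ i ∈ T, trib i) : S = T := by
  induction S using Finset.induction_on_max generalizing T with
  | empty =>
    refine (eq_empty_of_forall_notMem fun j hj => ?_).symm
    have := single_le_sum (fun _ _ => Nat.zero_le _) hj (f := trib)
    have := trib_pos (show 2 ≤ j by have := hT.1 j hj; omega)
    rw [sum_empty] at h
    omega
  | insert a s hlt ih =>
    have haT : ∀ x ∈ T, x ≤ a := fun x hx => by
      by_contra! hax
      refine (hS.sum_lt_sum_of_forall_lt hT hx fun i hi => ?_).ne h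
      rcases mem_insert.1 hi with rfl | hi
      exacts [hax, (hlt i hi).trans hax]
    have ha : a ∈ T := by
      by_contra haT'
      refine (hT.sum_lt_sum_of_forall_lt hS (mem_insert_self a s) fun i hi => ?_).ne h.symm
      exact lt_of_le_of_ne (haT i hi) fun e => haT' (e ▸ hi)
    have has : a ∉ s := fun h => (hlt a h).false
    have hsum : ∑ i ∈ s, trib i = ∑ i ∈ T.erase a, trib i := by
      rw [sum_insert has, ← sum_erase_add T _ ha] at h
      omega
    rw [← insert_erase ha, ih (hS.subset (subset_insert a s)) (hT.subset (erase_subset a T)) hsum]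

end IsTribRep

theorem exists_isTribRep_of_lt_trib {m n : ℕ} (hn : n < trib m) :
    ∃ S, IsTribRep S ∧ (∀ i ∈ S, i < m) ∧ ∑ i ∈ S, trib i = n := by
  induction m using Nat.strong_induction_on generalizing n with
  | _ m ih =>
  by_cases hm : m < 3
  · have hn0 : n = 0 := Nat.lt_one_iff.1 (hn.trans_le (trib_mono (show m ≤ 2 by omega)))
    exact ⟨∅, ⟨by simp, by simp⟩, by simp, by simp [hn0]⟩
  obtain ⟨k, rfl⟩ : ∃ k, m = k + 3 := ⟨m - 3, by omega⟩
  rw [trib_add_three] at hn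
  by_cases h₁ : n < trib (k + 2)
  · obtain ⟨S, hS, hlt, hsum⟩ := ih (k + 2) (by omega) h₁
    exact ⟨S, hS, fun i hi => (hlt i hi).trans (by omega), hsum⟩
  by_cases h₂ : n - trib (k + 2) < trib (k + 1)
  · have hk : k ≠ 0 := by rintro rfl; simp [trib] at *
    obtain ⟨S, hS, hlt, hsum⟩ := ih (k + 1) (by omega) h₂
    refine ⟨insert (k + 2) S, hS.insert_of_lt (by omega) (by grind) (by grind), by grind, ?_⟩
    rw [sum_insert (by grind)]
    omega
  have h₃ : n - trib (k + 2) - trib (k + 1) < trib k := by omega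
  have hk : 2 ≤ k := by
    by_contra!
    interval_cases k <;> simp [trib] at h₃
  obtain ⟨S, hS, hlt, hsum⟩ := ih k (by omega) h₃
  have hS' : IsTribRep (insert (k + 1) S) := hS.insert_of_lt (by omega) (by grind) (by grind)
  refine ⟨insert (k + 2) (insert (k + 1) S), hS'.insert_of_lt (by omega) (by grind) (by grind),
    by grind, ?_⟩
  rw [sum_insert (by grind), sum_insert (by grind)]
  omega

theorem exists_isTribRep_sum_eq (n : ℕ) : ∃ S, IsTribRep S ∧ ∑ i ∈ S, trib i = n :=
  let ⟨S, hS, _, hsum⟩ := exists_isTribRep_of_lt_trib (lt_trib_add_four n)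
  ⟨S, hS, hsum⟩

def InFirstColumn (n : ℕ) : Prop :=
  ∃ S : Finset ℕ, IsTribRep S ∧ 3 ∈ S ∧ n = ∑ i ∈ S, trib i

namespace InFirstColumn

variable {n : ℕ}

theorem pos (h : InFirstColumn n) : 0 < n := by
  obtain ⟨S, -, h3, rfl⟩ := h
  exact lt_of_lt_of_le (by decide) (single_le_sum (fun _ _ => Nat.zero_le _) h3 (f := trib))

theorem three_mem (h : InFirstColumn n) {R : Finset ℕ} (hR : IsTribRep R)
    (hsum : ∑ i ∈ R, trib i = n) : 3 ∈ R := by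
  obtain ⟨S, hS, h3, rfl⟩ := h
  rwa [hR.eq_of_sum_eq hS hsum]

theorem of_insert_three {R : Finset ℕ} {m : ℕ} (hR : IsTribRep R) (hsum : ∑ i ∈ R, trib i = m)
    (h3 : 3 ∉ R) (h45 : ¬(4 ∈ R ∧ 5 ∈ R)) : InFirstColumn (m + 1) := by
  have hlow : ∀ i < 3, i ∉ R := fun i hi h => by have := hR.1 i h; omega
  refine ⟨insert 3 R, hR.insert le_rfl (fun h => hlow 1 (by omega) h.1)
    (fun h => hlow 2 (by omega) h.1) h45, mem_insert_self 3 R, ?_⟩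
  rw [sum_insert h3, hsum, add_comm]
  rfl

theorem not_succ (h : InFirstColumn n) : ¬InFirstColumn (n + 1) := by
  rintro ⟨S, hS, h3, hsum⟩
  have hsum' : ∑ i ∈ S.erase 3, trib i = n := by
    rw [← sum_erase_add S _ h3] at hsum
    exact (Nat.add_right_cancel hsum).symm
  exact notMem_erase 3 S (h.three_mem (hS.subset (erase_subset 3 S)) hsum')

theorem add_two_or_add_three (h : InFirstColumn n) :
    InFirstColumn (n + 2) ∨ InFirstColumn (n + 3) := by
  obtain ⟨R₁, hR₁, hsum₁⟩ := exists_isTribRep_sum_eq (n + 1)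
  obtain ⟨R₂, hR₂, hsum₂⟩ := exists_isTribRep_sum_eq (n + 2)
  have h3R₁ : 3 ∉ R₁ := fun h3 => h.not_succ ⟨R₁, hR₁, h3, hsum₁.symm⟩
  by_cases h3R₂ : 3 ∈ R₂
  · exact .inl ⟨R₂, hR₂, h3R₂, hsum₂.symm⟩
  by_cases h45R₁ : 4 ∈ R₁ ∧ 5 ∈ R₁
  swap
  · exact .inl (of_insert_three hR₁ hsum₁ h3R₁ h45R₁)
  by_cases h45R₂ : 4 ∈ R₂ ∧ 5 ∈ R₂
  swap
  · exact .inr (of_insert_three hR₂ hsum₂ h3R₂ h45R₂)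
  exfalso
  have hstrip : ∀ R : Finset ℕ, 4 ∈ R ∧ 5 ∈ R → ∑ i ∈ R \ {4, 5}, trib i + 6 = ∑ i ∈ R, trib i :=
    fun R h45 => sum_sdiff (f := trib) (insert_subset h45.1 (singleton_subset_iff.2 h45.2))
  have hT₁ : IsTribRep (R₁ \ {4, 5}) := hR₁.subset sdiff_subset
  have hT₂ : IsTribRep (R₂ \ {4, 5}) := hR₂.subset sdiff_subset
  have hcol := of_insert_three hT₁ rfl (fun h => h3R₁ (sdiff_subset h))
    (fun h => (mem_sdiff.1 h.1).2 (mem_insert_self 4 {5}))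
  have := hstrip R₁ h45R₁
  have := hstrip R₂ h45R₂
  exact h3R₂ (sdiff_subset (hcol.three_mem hT₂ (by omega)))

end InFirstColumn

theorem StrictMono.apply_succ_le_of_lt {c : ℕ → ℕ} (hc : StrictMono c) {r s : ℕ}
    (h : c r < c s) : c (r + 1) ≤ c s :=
  hc.monotone (hc.lt_iff_lt.1 h)

/-- If `c` enumerates (in increasing order, starting at index 0) the positive
    integers whose Tribonacci representation set contains 3 (the first column of
    the Trithoff array), then consecutive differences are always 2 or 3. -/
theorem first_column_differences (c : ℕ → ℕ) (hmono : StrictMono c)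
    (hrange : ∀ n : ℕ, (∃ r : ℕ, c r = n) ↔
      (0 < n ∧ ∃ S : Finset ℕ, IsTribRep S ∧ 3 ∈ S ∧ n = ∑ i ∈ S, trib i)) :
    ∀ r : ℕ, c (r + 1) - c r = 2 ∨ c (r + 1) - c r = 3 := by
  intro r
  have hcol : ∀ s, InFirstColumn (c s) := fun s => ((hrange _).1 ⟨s, rfl⟩).2
  have hlt : c r < c (r + 1) := hmono r.lt_succ_self
  have hne : c (r + 1) ≠ c r + 1 := fun he => (hcol r).not_succ (he ▸ hcol (r + 1))
  have hle : c (r + 1) ≤ c r + 3 := by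
    rcases (hcol r).add_two_or_add_three with h | h <;>
    · obtain ⟨s, hs⟩ := (hrange _).2 ⟨h.pos, h⟩
      have := hmono.apply_succ_le_of_lt (r := r) (s := s) (by omega)
      omega
  omega
end

section
/- Let A be any finite set of natural numbers all of whose elements are at least 3 (A may contain three consecutive integers), and let B be a Tribonacci representation set with ∑_{i∈A} T(i) = ∑_{i∈B} T(i). Then ∑_{i∈A} T(i+1) = ∑_{i∈B} T(i+1). In other words, the shifted value of a proper (possibly non-canonical) Tribonacci representation of n equals out(n). -/
/-!
Both `T` and `n ↦ T (n + 1)` satisfy the Tribonacci recurrence, so replacing a block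
`i, i + 1, i + 2` of `A` by `i + 3` (with `i + 3 ∉ A`) changes neither shifted nor unshifted sum,
and lowers the cardinality. Iterating, `A` is carried to a set without three consecutive indices
with the same two sums. Tribonacci representations are unique, since a representation with all
indices below `m` sums to less than `T m`; so that set is `B`.
-/

open Finset

theorem trib_le_trib_succ (n : ℕ) : trib n ≤ trib (n + 1) := by
  match n with
  | 0 | 1 => simp [trib]
  | n + 2 =>
    rw [trib_add_three n]
    omega

theorem forall_mem_lt_of_notMem {S : Finset ℕ} {n : ℕ} (hS : ∀ i ∈ S, i < n + 1)
    (hn : n ∉ S) : ∀ i ∈ S, i < n :=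
  fun i hi => (Nat.lt_succ_iff.1 (hS i hi)).lt_of_ne fun h => hn (h ▸ hi)

theorem forall_mem_erase_lt {S : Finset ℕ} {n : ℕ} (hS : ∀ i ∈ S, i < n + 1) :
    ∀ i ∈ S.erase n, i < n :=
  forall_mem_lt_of_notMem (fun i hi => hS i (mem_of_mem_erase hi)) (notMem_erase _ _)

theorem IsTribRep.mono {S S' : Finset ℕ} (hS : IsTribRep S) (h : S' ⊆ S) : IsTribRep S' :=
  ⟨fun i hi => hS.1 i (h hi), fun i hc => hS.2 i ⟨h hc.1, h hc.2.1, h hc.2.2⟩⟩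

theorem IsTribRep.sum_trib_lt {S : Finset ℕ} (hS : IsTribRep S) {m : ℕ}
    (hm : ∀ i ∈ S, i < m + 2) : ∑ i ∈ S, trib i < trib (m + 2) := by
  induction m using Nat.strong_induction_on generalizing S with
  | _ m ih =>
  by_cases htop : m + 1 ∈ S
  · by_cases hnext : m ∈ S
    · obtain ⟨j, rfl⟩ : ∃ j, m = j + 3 := ⟨m - 3, by have := hS.1 _ hnext; omega⟩
      have hgap : j + 2 ∉ S := fun h => hS.2 _ ⟨h, hnext, htop⟩
      have hrest : ∑ i ∈ (S.erase (j + 4)).erase (j + 3), trib i < trib (j + 2) :=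
        ih j (by omega) (hS.mono ((erase_subset _ _).trans (erase_subset _ _)))
          (forall_mem_lt_of_notMem (forall_mem_erase_lt (forall_mem_erase_lt hm))
            fun h => hgap (mem_of_mem_erase (mem_of_mem_erase h)))
      have hsplit₁ : ∑ i ∈ S.erase (j + 4), trib i + trib (j + 4) = ∑ i ∈ S, trib i :=
        sum_erase_add _ _ htop
      have hsplit₂ : ∑ i ∈ (S.erase (j + 4)).erase (j + 3), trib i + trib (j + 3) =
          ∑ i ∈ S.erase (j + 4), trib i :=
        sum_erase_add _ _ (mem_erase.2 ⟨by omega, hnext⟩)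
      have hrec : trib (j + 5) = trib (j + 4) + trib (j + 3) + trib (j + 2) := trib_add_three _
      show _ < trib (j + 5)
      omega
    · obtain ⟨k, rfl⟩ : ∃ k, m = k + 2 := ⟨m - 2, by have := hS.1 _ htop; omega⟩
      have hrest : ∑ i ∈ S.erase (k + 3), trib i < trib (k + 2) :=
        ih k (by omega) (hS.mono (erase_subset _ _))
          (forall_mem_lt_of_notMem (forall_mem_erase_lt hm) fun h => hnext (mem_of_mem_erase h))
      have hsplit : ∑ i ∈ S.erase (k + 3), trib i + trib (k + 3) = ∑ i ∈ S, trib i :=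
        sum_erase_add _ _ htop
      have hrec : trib (k + 4) = trib (k + 3) + trib (k + 2) + trib (k + 1) := trib_add_three _
      show _ < trib (k + 4)
      omega
  · rcases m with _ | k
    · have hS0 : S = ∅ := eq_empty_of_forall_notMem fun i hi => by
        have := hS.1 i hi
        have := hm i hi
        omega
      simp [hS0, trib]
    · exact (ih k (by omega) hS (forall_mem_lt_of_notMem hm htop)).trans_le
        (trib_le_trib_succ _)

theorem IsTribRep.exists_le_of_trib_le_sum {S : Finset ℕ} (hS : IsTribRep S) {c : ℕ}
    (hc : 2 ≤ c) (h : trib c ≤ ∑ i ∈ S, trib i) : ∃ i ∈ S, c ≤ i := by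
  by_contra! hlt
  obtain ⟨m, rfl⟩ : ∃ m, c = m + 2 := ⟨c - 2, by omega⟩
  exact (hS.sum_trib_lt hlt).not_ge h

theorem IsTribRep.sdiff_eq_empty {A B : Finset ℕ} (hA : IsTribRep A) (hB : IsTribRep B)
    (h : ∑ i ∈ A, trib i = ∑ i ∈ B, trib i) : A \ B = ∅ := by
  have hsum : ∑ i ∈ A \ B, trib i = ∑ i ∈ B \ A, trib i := sum_sdiff_eq_sum_sdiff_iff.2 h
  by_contra hne
  have hAB := nonempty_iff_ne_empty.2 hne
  set c := (A \ B).max' hAB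
  have hc : c ∈ A \ B := max'_mem _ _
  -- the top index `c` of `A \ B` is exceeded by an index `d` of `B \ A`, and `d` by one of `A \ B`
  obtain ⟨d, hd, hcd⟩ := (hB.mono sdiff_subset).exists_le_of_trib_le_sum
    (by have := hA.1 c (mem_sdiff.1 hc).1; omega)
    (hsum ▸ single_le_sum (fun _ _ => Nat.zero_le _) hc)
  have hcd : c < d := hcd.lt_of_ne fun hcd => (mem_sdiff.1 hd).2 (hcd ▸ (mem_sdiff.1 hc).1)
  obtain ⟨c', hc', hdc'⟩ := (hA.mono sdiff_subset).exists_le_of_trib_le_sum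
    (by have := hB.1 d (mem_sdiff.1 hd).1; omega)
    (hsum ▸ single_le_sum (fun _ _ => Nat.zero_le _) hd)
  exact absurd (le_max' _ c' hc') (by omega)

theorem IsTribRep.eq_of_sum_eq_s11 {A B : Finset ℕ} (hA : IsTribRep A) (hB : IsTribRep B)
    (h : ∑ i ∈ A, trib i = ∑ i ∈ B, trib i) : A = B :=
  (sdiff_eq_empty_iff_subset.1 (hA.sdiff_eq_empty hB h)).antisymm
    (sdiff_eq_empty_iff_subset.1 (hB.sdiff_eq_empty hA h.symm))

def carry (A : Finset ℕ) (i : ℕ) : Finset ℕ := insert (i + 3) (A \ {i, i + 1, i + 2})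

section carry

variable {A : Finset ℕ} {i : ℕ}

theorem sum_carry {M : Type*} [AddCommMonoid M] {f : ℕ → M} (hi : {i, i + 1, i + 2} ⊆ A)
    (hi3 : i + 3 ∉ A) (hf : f (i + 3) = f (i + 2) + f (i + 1) + f i) :
    ∑ j ∈ carry A i, f j = ∑ j ∈ A, f j := by
  rw [carry, sum_insert fun h => hi3 (mem_sdiff.1 h).1, ← sum_sdiff hi,
    sum_insert (by simp), sum_pair (by simp), hf]
  abel

theorem card_carry (hi : {i, i + 1, i + 2} ⊆ A) (hi3 : i + 3 ∉ A) :
    #(carry A i) + 2 = #A := by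
  rw [carry, card_insert_of_notMem fun h => hi3 (mem_sdiff.1 h).1, card_sdiff_of_subset hi,
    card_insert_of_notMem (by simp), card_pair (by simp)]
  have := card_le_card hi
  rw [card_insert_of_notMem (by simp), card_pair (by simp)] at this
  omega

theorem three_le_of_mem_carry (hA : ∀ j ∈ A, 3 ≤ j) : ∀ j ∈ carry A i, 3 ≤ j := by
  intro j hj
  rcases mem_insert.1 hj with rfl | hj
  · omega
  · exact hA j (mem_sdiff.1 hj).1

theorem exists_carry_of_not_isTribRep (hA : ∀ j ∈ A, 3 ≤ j) (hrep : ¬IsTribRep A) :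
    ∃ i, {i, i + 1, i + 2} ⊆ A ∧ i + 3 ∉ A := by
  have htriples : (A.filter fun j => j + 1 ∈ A ∧ j + 2 ∈ A).Nonempty := by
    by_contra hnone
    exact hrep ⟨hA, fun j hj => hnone ⟨j, mem_filter.2 hj⟩⟩
  set i := (A.filter fun j => j + 1 ∈ A ∧ j + 2 ∈ A).max' htriples
  obtain ⟨hi, hi1, hi2⟩ : i ∈ A ∧ i + 1 ∈ A ∧ i + 2 ∈ A :=
    mem_filter.1 (max'_mem _ htriples)
  refine ⟨i, by simp [insert_subset_iff, *], fun hi3 => ?_⟩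
  have : i + 1 ≤ i := le_max' _ (i + 1) (mem_filter.2 ⟨hi1, hi2, hi3⟩)
  omega

end carry

theorem exists_isTribRep_forall_sum_eq {M : Type*} [AddCommMonoid M] (A : Finset ℕ)
    (hA : ∀ i ∈ A, 3 ≤ i) :
    ∃ B, IsTribRep B ∧ ∀ f : ℕ → M, (∀ n, f (n + 3) = f (n + 2) + f (n + 1) + f n) →
      ∑ i ∈ A, f i = ∑ i ∈ B, f i := by
  induction hcard : #A using Nat.strong_induction_on generalizing A with
  | _ n ih =>
  by_cases hrep : IsTribRep A
  · exact ⟨A, hrep, fun _ _ => rfl⟩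
  obtain ⟨i, hi, hi3⟩ := exists_carry_of_not_isTribRep hA hrep
  obtain ⟨B, hB, hsum⟩ := ih _ (by have := card_carry hi hi3; omega) (carry A i)
    (three_le_of_mem_carry hA) rfl
  exact ⟨B, hB, fun f hf => (sum_carry hi hi3 (hf i)).symm.trans (hsum f hf)⟩

/-- Any proper (possibly non-canonical) Tribonacci representation respects the
    successor: if `A` is a finite set of indices `≥ 3` (possibly containing three
    consecutive integers) and `B` is the Tribonacci representation set of the same
    number, then the shifted sums agree. -/
theorem out_well_defined_on_proper_reps (A : Finset ℕ) (hA : ∀ i ∈ A, 3 ≤ i)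
    (B : Finset ℕ) (hB : IsTribRep B)
    (h : ∑ i ∈ A, trib i = ∑ i ∈ B, trib i) :
    ∑ i ∈ A, trib (i + 1) = ∑ i ∈ B, trib (i + 1) := by
  obtain ⟨C, hC, hsum⟩ := exists_isTribRep_forall_sum_eq (M := ℕ) A hA
  obtain rfl : C = B := hC.eq_of_sum_eq_s11 hB ((hsum trib trib_add_three).symm.trans h)
  exact hsum (fun i => trib (i + 1)) fun n => trib_add_three (n + 1)
end
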